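/- (Column-sum bound via left eigen-weights gives norm decay for the pinned Laplacian with perturbation) Suppose θ_i > 0, θ* > 0 and ∑_i θ_i ã_{ij} < −θ* for all j, with ã_{ij} ≥ 0 for i ≠ j. Let V(v) = ∑_i θ_i ‖v_i‖_1 for v = (v_1,…,v_m) ∈ (ℝ^n)^m. Then for any nonzero v_1,…,v_m, any g_1,…,g_m ∈ ℝ^n with ∑_i θ_i ‖g_i‖_1 ≤ L̃ V(v), and any perturbations u_1,…,u_m with ‖u_i‖_1 ≤ c̃, the upper Dini derivative estimate holds: ∑_i θ_i ∑_k sign(v_i^k)[g_i^k + c ∑_j ã_{ij} v_j^k/‖v_j‖_1 + u_i^k] ≤ L̃ V(v) − c m θ* + c̃ m·max_i θ_i ≤ L̃ V(v) − c m θ* + c̃ m. -/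

import Mathlib

/-!
Each coordinate term `sign (v_i^k) · w^k` is at most `|w^k|`, and equals `|v_i^k|` when
`w = v_i`. Hence the drift and perturbation parts contribute at most their `ℓ¹` norms, while in
the coupling part the normalised column `v_j / ‖v_j‖₁` contributes at most `ã_{ij}` for `j ≠ i`
(where `ã_{ij} ≥ 0`) and exactly `ã_{ii}` for `j = i`. Weighting by `θ` and exchanging the order
of summation turns the coupling bound into the column sums `∑_i θ_i ã_{ij} < -θ*`, and
`1 = ∑_i θ_i ≤ m · max_i θ_i ≤ m` controls the perturbation part.
-/

open Finset

namespace Real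

theorem abs_sign_le_one (r : ℝ) : |sign r| ≤ 1 := by
  rcases sign_apply_eq r with h | h | h <;> simp [h]

theorem sign_mul_le_abs (r y : ℝ) : sign r * y ≤ |y| :=
  calc sign r * y ≤ |sign r| * |y| := (le_abs_self _).trans (abs_mul _ _).le
    _ ≤ |y| := mul_le_of_le_one_left (abs_nonneg y) (abs_sign_le_one r)

theorem sign_mul_self_eq_abs (r : ℝ) : sign r * r = |r| := by
  rcases lt_trichotomy r 0 with h | rfl | h
  · rw [sign_of_neg h, abs_of_neg h, neg_one_mul]
  · simp
  · rw [sign_of_pos h, abs_of_pos h, one_mul]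

end Real

section

variable {ι κ : Type*} [Fintype ι] [Fintype κ]

theorem sum_sign_mul_le_sum_abs (x y : κ → ℝ) :
    ∑ k, Real.sign (x k) * y k ≤ ∑ k, |y k| :=
  sum_le_sum fun _ _ => Real.sign_mul_le_abs _ _

theorem sum_abs_pos_of_ne_zero {x : κ → ℝ} (hx : x ≠ 0) : 0 < ∑ k, |x k| := by
  obtain ⟨l, hl⟩ := Function.ne_iff.mp hx
  exact (abs_pos.mpr hl).trans_le
    (single_le_sum (f := fun k => |x k|) (fun _ _ => abs_nonneg _) (mem_univ l))

theorem div_sum_abs_mul_sum_sign_mul_le {a : ℝ} {x y : κ → ℝ} (hy : y ≠ 0)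
    (h : y = x ∨ 0 ≤ a) :
    a / (∑ l, |y l|) * ∑ k, Real.sign (x k) * y k ≤ a := by
  have hS := sum_abs_pos_of_ne_zero hy
  rcases h with rfl | ha
  · simp_rw [Real.sign_mul_self_eq_abs, div_mul_cancel₀ _ hS.ne', le_refl]
  · calc a / (∑ l, |y l|) * ∑ k, Real.sign (x k) * y k
        ≤ a / (∑ l, |y l|) * ∑ l, |y l| :=
          mul_le_mul_of_nonneg_left (sum_sign_mul_le_sum_abs x y) (div_nonneg ha hS.le)
      _ = a := div_mul_cancel₀ _ hS.ne'

theorem sum_sign_mul_coupling_le (A : Matrix ι ι ℝ) (v : ι → κ → ℝ) (i : ι)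
    (hoff : ∀ j, i ≠ j → 0 ≤ A i j) (hv : ∀ j, v j ≠ 0) :
    ∑ k, Real.sign (v i k) * ∑ j, A i j * v j k / (∑ l, |v j l|) ≤ ∑ j, A i j := by
  calc ∑ k, Real.sign (v i k) * ∑ j, A i j * v j k / (∑ l, |v j l|)
      = ∑ j, A i j / (∑ l, |v j l|) * ∑ k, Real.sign (v i k) * v j k := by
        simp_rw [mul_sum]
        rw [sum_comm]
        exact sum_congr rfl fun j _ => sum_congr rfl fun k _ => by ring
    _ ≤ ∑ j, A i j := sum_le_sum fun j _ =>
        div_sum_abs_mul_sum_sign_mul_le (hv j)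
          ((em (j = i)).imp (congrArg v) (hoff j ∘ Ne.symm))

theorem sum_sign_mul_perturbed_coupling_le (A : Matrix ι ι ℝ) (v g u : ι → κ → ℝ) (i : ι)
    {c : ℝ} (hc : 0 ≤ c) (hoff : ∀ j, i ≠ j → 0 ≤ A i j) (hv : ∀ j, v j ≠ 0) :
    ∑ k, Real.sign (v i k) * (g i k + c * ∑ j, A i j * v j k / (∑ l, |v j l|) + u i k) ≤
      ∑ k, |g i k| + c * ∑ j, A i j + ∑ k, |u i k| := by
  simp_rw [mul_add, sum_add_distrib, mul_left_comm _ c, ← mul_sum]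
  gcongr ?_ + c * ?_ + ?_
  · exact sum_sign_mul_le_sum_abs _ _
  · exact sum_sign_mul_coupling_le A v i hoff hv
  · exact sum_sign_mul_le_sum_abs _ _

end

section

variable {ι : Type*} [Fintype ι]

theorem weighted_row_sums_le_of_column_sums_lt (A : Matrix ι ι ℝ) (θ : ι → ℝ) {θstar : ℝ}
    (hcol : ∀ j, ∑ i, θ i * A i j < -θstar) :
    ∑ i, θ i * ∑ j, A i j ≤ -(Fintype.card ι * θstar) := by
  calc ∑ i, θ i * ∑ j, A i j = ∑ j, ∑ i, θ i * A i j := by simp_rw [mul_sum]; exact sum_comm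
    _ ≤ ∑ _j : ι, -θstar := sum_le_sum fun j _ => (hcol j).le
    _ = -(Fintype.card ι * θstar) := by simp

variable {θ : ι → ℝ}

theorem sup'_le_one_of_sum_eq_one (hne : (univ : Finset ι).Nonempty) (hθ : ∀ i, 0 ≤ θ i)
    (hθsum : ∑ i, θ i = 1) :
    univ.sup' hne θ ≤ 1 :=
  sup'_le hne θ fun i _ => hθsum ▸ single_le_sum (fun j _ => hθ j) (mem_univ i)

theorem one_le_card_mul_sup'_of_sum_eq_one (hne : (univ : Finset ι).Nonempty)
    (hθsum : ∑ i, θ i = 1) :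
    1 ≤ Fintype.card ι * univ.sup' hne θ :=
  calc (1 : ℝ) = ∑ i, θ i := hθsum.symm
    _ ≤ ∑ _i : ι, univ.sup' hne θ := sum_le_sum fun i _ => le_sup' θ (mem_univ i)
    _ = Fintype.card ι * univ.sup' hne θ := by simp

end

theorem pinned_laplacian_perturbed_decay_general (m n : ℕ) (hm : 0 < m)
    (Atil : Matrix (Fin m) (Fin m) ℝ)
    (hoff : ∀ i j, i ≠ j → 0 ≤ Atil i j)
    (θ : Fin m → ℝ) (hθ : ∀ i, 0 < θ i) (hθsum : (∑ i, θ i) = 1)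
    (θstar : ℝ)
    (hcol : ∀ j, ∑ i, θ i * Atil i j < -θstar)
    (v g u : Fin m → Fin n → ℝ) (hv : ∀ i, v i ≠ 0)
    (Ltil c ctil : ℝ) (hc : 0 < c) (hctil : 0 ≤ ctil)
    (hg : ∑ i, θ i * ∑ k, |g i k| ≤ Ltil * ∑ i, θ i * ∑ k, |v i k|)
    (hu : ∀ i, ∑ k, |u i k| ≤ ctil) :
    (∑ i, θ i * ∑ k, Real.sign (v i k) *
        (g i k + c * ∑ j, Atil i j * v j k / (∑ l, |v j l|) + u i k)) ≤
      Ltil * (∑ i, θ i * ∑ k, |v i k|) - c * m * θstar +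
        ctil * m * (univ.sup' (univ_nonempty_iff.mpr (Fin.pos_iff_nonempty.mp hm)) θ) ∧
    Ltil * (∑ i, θ i * ∑ k, |v i k|) - c * m * θstar +
        ctil * m * (univ.sup' (univ_nonempty_iff.mpr (Fin.pos_iff_nonempty.mp hm)) θ) ≤
      Ltil * (∑ i, θ i * ∑ k, |v i k|) - c * m * θstar + ctil * m := by
  set hne := univ_nonempty_iff.mpr (Fin.pos_iff_nonempty.mp hm)
  have hcoupling := weighted_row_sums_le_of_column_sums_lt Atil θ hcol
  have hσ := one_le_card_mul_sup'_of_sum_eq_one hne hθsum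
  rw [Fintype.card_fin] at hcoupling hσ
  have hperturb : ∑ i, θ i * ∑ k, |u i k| ≤ ctil * m * univ.sup' hne θ :=
    calc ∑ i, θ i * ∑ k, |u i k| ≤ ∑ i, θ i * ctil :=
          sum_le_sum fun i _ => mul_le_mul_of_nonneg_left (hu i) (hθ i).le
      _ = ctil * 1 := by rw [← sum_mul, hθsum, mul_comm]
      _ ≤ ctil * (m * univ.sup' hne θ) := mul_le_mul_of_nonneg_left hσ hctil
      _ = ctil * m * univ.sup' hne θ := (mul_assoc _ _ _).symm
  constructor
  · calc _ ≤ ∑ i, θ i * (∑ k, |g i k| + c * ∑ j, Atil i j + ∑ k, |u i k|) :=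
          sum_le_sum fun i _ => mul_le_mul_of_nonneg_left
            (sum_sign_mul_perturbed_coupling_le Atil v g u i hc.le (hoff i) hv) (hθ i).le
      _ = ∑ i, θ i * ∑ k, |g i k| + c * ∑ i, θ i * ∑ j, Atil i j +
            ∑ i, θ i * ∑ k, |u i k| := by
          simp only [mul_add, sum_add_distrib, mul_left_comm _ c, ← mul_sum]
      _ ≤ _ := by linarith [mul_le_mul_of_nonneg_left hcoupling hc.le]
  · have hσ1 := sup'_le_one_of_sum_eq_one hne (fun i => (hθ i).le) hθsum
    linarith [mul_le_of_le_one_right (by positivity : (0 : ℝ) ≤ ctil * m) hσ1]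

open Finset in
/-- Column-sum bound via left eigen-weights gives norm decay for the pinned
Laplacian with perturbation (combined estimate for heterogeneous networks). -/
theorem pinned_laplacian_perturbed_decay (m n : ℕ) (hm : 0 < m)
    (Atil : Matrix (Fin m) (Fin m) ℝ)
    (hoff : ∀ i j, i ≠ j → 0 ≤ Atil i j)
    (θ : Fin m → ℝ) (hθ : ∀ i, 0 < θ i) (hθsum : (∑ i, θ i) = 1)
    (θstar : ℝ) (hθstar : 0 < θstar)
    (hcol : ∀ j, ∑ i, θ i * Atil i j < -θstar)
    (v g u : Fin m → Fin n → ℝ) (hv : ∀ i, v i ≠ 0)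
    (Ltil c ctil : ℝ) (hL : 0 < Ltil) (hc : 0 < c) (hctil : 0 ≤ ctil)
    (hg : ∑ i, θ i * ∑ k, |g i k| ≤ Ltil * ∑ i, θ i * ∑ k, |v i k|)
    (hu : ∀ i, ∑ k, |u i k| ≤ ctil) :
    (∑ i, θ i * ∑ k, Real.sign (v i k) *
        (g i k + c * ∑ j, Atil i j * v j k / (∑ l, |v j l|) + u i k)) ≤
      Ltil * (∑ i, θ i * ∑ k, |v i k|) - c * m * θstar +
        ctil * m * (univ.sup' (univ_nonempty_iff.mpr (Fin.pos_iff_nonempty.mp hm)) θ) ∧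
    Ltil * (∑ i, θ i * ∑ k, |v i k|) - c * m * θstar +
        ctil * m * (univ.sup' (univ_nonempty_iff.mpr (Fin.pos_iff_nonempty.mp hm)) θ) ≤
      Ltil * (∑ i, θ i * ∑ k, |v i k|) - c * m * θstar + ctil * m :=
  pinned_laplacian_perturbed_decay_general m n hm Atil hoff θ hθ hθsum θstar hcol v g u hv Ltil c
    ctil hc hctil hg hu
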